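/- The squares of the q-Fibonacci polynomials satisfy, for all n ≥ 3: f(n,x,s)² - (x² + qs) f(n-1,x,qs)² - qs(x² + qs) f(n-2,x,q²s)² + q⁵ s³ f(n-3,x,q³s)² = 0. -/
import Mathlib


/-- Carlitz q-Fibonacci polynomials. -/
def qFib (q x s : ℝ) : ℕ → ℝ
  | 0 => 0
  | 1 => 1
  | (n+2) => x * qFib q x s (n+1) + q^n * s * qFib q x s n

theorem qFib_shift (q x : ℝ) : ∀ (m : ℕ) (s : ℝ),
    qFib q x s (m+2) = x * qFib q x (q*s) (m+1) + q*s * qFib q x (q^2*s) m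
  | 0, s => by simp [qFib]
  | 1, s => by simp [qFib]
  | (m+2), s => by
    have h1 := qFib_shift q x m s
    have h2 := qFib_shift q x (m+1) s
    show x * qFib q x s (m+3) + q^(m+2) * s * qFib q x s (m+2) = _
    rw [h1, h2]
    show _ = x * (x * qFib q x (q*s) (m+2) + q^(m+1) * (q*s) * qFib q x (q*s) (m+1))
        + q*s * (x * qFib q x (q^2*s) (m+1) + q^m * (q^2*s) * qFib q x (q^2*s) m)
    ring

theorem qFib_sq_recurrence (q x s : ℝ) (n : ℕ) (hn : 3 ≤ n) :
    qFib q x s n ^ 2 - (x^2 + q*s) * qFib q x (q*s) (n-1) ^ 2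
      - q * s * (x^2 + q*s) * qFib q x (q^2*s) (n-2) ^ 2
      + q^5 * s^3 * qFib q x (q^3*s) (n-3) ^ 2 = 0 := by
  obtain ⟨m, rfl⟩ : ∃ m, n = m + 3 := ⟨n - 3, by omega⟩
  simp only [show m+3-1 = m+2 from rfl, show m+3-2 = m+1 from rfl, show m+3-3 = m from rfl]
  have h1 := qFib_shift q x (m+1) s
  have h2 := qFib_shift q x m (q*s)
  have e1 : q*(q*s) = q^2*s := by ring
  have e2 : q^2*(q*s) = q^3*s := by ring
  rw [e1, e2] at h2
  rw [show m+3 = (m+1)+2 from rfl, h1, h2]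
  ring
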